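/- The graded component of degree a of HC_1(ℂ_q) has dimension 0 if a ∉ rad f, dimension n if a ∈ rad f \ {0}, and dimension n+1 if a = 0. -/

import Mathlib

/-- `σ(a,b) = ∏_{0 ≤ i ≤ j ≤ n} q_{ji}^{a_j b_i}`. -/
noncomputable def sig {n : ℕ} (q : Fin (n+1) → Fin (n+1) → ℂˣ)
    (a b : Fin (n+1) → ℤ) : ℂˣ :=
  ∏ i : Fin (n+1), ∏ j : Fin (n+1), if i ≤ j then q j i ^ (a j * b i) else 1

/-- `f(a,b) = σ(a,b) σ(b,a)⁻¹`. -/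
noncomputable def ff {n : ℕ} (q : Fin (n+1) → Fin (n+1) → ℂˣ)
    (a b : Fin (n+1) → ℤ) : ℂˣ :=
  sig q a b * (sig q b a)⁻¹
open scoped TensorProduct

/-- The subspace `J ⊆ ℂ_q ⊗ ℂ_q` spanned by `x⊗y + y⊗x` and
`xy⊗z + yz⊗x + zx⊗y`. -/
noncomputable def Jmod (C : Type*) [Ring C] [Algebra ℂ C] :
    Submodule ℂ (C ⊗[ℂ] C) :=
  Submodule.span ℂ
    ({p | ∃ x y : C, p = x ⊗ₜ[ℂ] y + y ⊗ₜ[ℂ] x} ∪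
     {p | ∃ x y z : C, p = (x * y) ⊗ₜ[ℂ] z + (y * z) ⊗ₜ[ℂ] x + (z * x) ⊗ₜ[ℂ] y})

/-- `⟨x,y⟩`, the class of `x ⊗ y` in `(ℂ_q ⊗ ℂ_q)/J`. -/
noncomputable def bra {C : Type*} [Ring C] [Algebra ℂ C] (x y : C) :
    (C ⊗[ℂ] C) ⧸ Jmod C :=
  Submodule.Quotient.mk (x ⊗ₜ[ℂ] y)

/-- The commutator map `C ⊗ C → C`, `x ⊗ y ↦ xy - yx`. -/
noncomputable def brkt (C : Type*) [Ring C] [Algebra ℂ C] :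
    C ⊗[ℂ] C →ₗ[ℂ] C :=
  TensorProduct.lift (LinearMap.mul ℂ C - (LinearMap.mul ℂ C).flip)

/-- `HC₁(ℂ_q) = { ∑ ⟨xᵢ,yᵢ⟩ : ∑ [xᵢ,yᵢ] = 0 }`, the image in `(ℂ_q⊗ℂ_q)/J` of the
kernel of the commutator map. -/
noncomputable def HC1 (C : Type*) [Ring C] [Algebra ℂ C] :
    Submodule ℂ ((C ⊗[ℂ] C) ⧸ Jmod C) :=
  (LinearMap.ker (brkt C)).map (Jmod C).mkQ


/-!
In degree `a` the classes `⟨t^r, t^(a-r)⟩` span, and the cyclic relation of `J` gives, for all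
`r s t`,
`(σ(s,r+t) - σ(r+t,s)) ⟨t^r, t^(s+t)⟩ = (σ(r,s+t) - σ(s+t,r)) ⟨t^s, t^(t+r)⟩`.
Moreover `σ(r,s) = σ(s,r)` for all `r + s = a` exactly when `a ∈ rad f`.

If `a ∉ rad f`, pick `r₀ + s₀ = a` with `σ(r₀,s₀) ≠ σ(s₀,r₀)`: the relation puts every class into
the line through `⟨t^r₀, t^s₀⟩`, on which the commutator map `⟨x,y⟩ ↦ xy - yx` is injective.

If `a ∈ rad f`, every class of degree `a` is a cycle, and the normalised class
`σ(r,a-r)⁻¹ ⟨t^r, t^(a-r)⟩` is additive in `r` and vanishes at `r = a`. Hence the degree-`a` part is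
the image of the linear map `ℂ^(n+1) → (ℂ_q ⊗ ℂ_q)/J` extending this class, and its kernel contains
`a`. The kernel is exactly `ℂ a`: for a linear form `φ` with `φ(a) = 0`, the bilinear form
`(t^r, t^s) ↦ [r + s = a] φ(r) σ(r,s)` vanishes on `J` and recovers `φ` through the map.
-/

section Algebra

variable {C : Type*} [Ring C] [Algebra ℂ C]

lemma brkt_tmul (x y : C) : brkt C (x ⊗ₜ[ℂ] y) = x * y - y * x := by
  simp [brkt]

lemma Jmod_le_ker_brkt : Jmod C ≤ LinearMap.ker (brkt C) := by
  rw [Jmod, Submodule.span_le]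
  rintro p (⟨x, y, rfl⟩ | ⟨x, y, z, rfl⟩) <;>
    simp only [SetLike.mem_coe, LinearMap.mem_ker, map_add, brkt_tmul, mul_assoc] <;> abel

variable (C) in
noncomputable def brktQ : (C ⊗[ℂ] C) ⧸ Jmod C →ₗ[ℂ] C :=
  (Jmod C).liftQ (brkt C) Jmod_le_ker_brkt

@[simp]
lemma brktQ_bra (x y : C) : brktQ C (bra x y) = x * y - y * x := by
  simp [brktQ, bra, brkt_tmul]

lemma HC1_eq_ker_brktQ : HC1 C = LinearMap.ker (brktQ C) :=
  (Submodule.ker_liftQ _ _ _).symm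

lemma bra_smul_left (c : ℂ) (x y : C) : bra (c • x) y = c • bra x y := by
  rw [bra, bra, ← TensorProduct.smul_tmul', Submodule.Quotient.mk_smul]

lemma bra_add_bra_swap (x y : C) : bra x y + bra y x = 0 := by
  rw [bra, bra, ← Submodule.Quotient.mk_add, Submodule.Quotient.mk_eq_zero]
  exact Submodule.subset_span (Or.inl ⟨x, y, rfl⟩)

lemma bra_swap (x y : C) : bra y x = -bra x y :=
  eq_neg_of_add_eq_zero_right (bra_add_bra_swap x y)

lemma bra_mul_add_bra_mul_add_bra_mul (x y z : C) :
    bra (x * y) z + bra (y * z) x + bra (z * x) y = 0 := by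
  rw [bra, bra, bra, ← Submodule.Quotient.mk_add, ← Submodule.Quotient.mk_add,
    Submodule.Quotient.mk_eq_zero]
  exact Submodule.subset_span (Or.inr ⟨x, y, z, rfl⟩)

lemma Jmod_le_ker_lift {M : Type*} [AddCommGroup M] [Module ℂ M] {ι : Type*} {v : ι → C}
    (hv : Submodule.span ℂ (Set.range v) = ⊤) (B : C →ₗ[ℂ] C →ₗ[ℂ] M)
    (hanti : ∀ i j, B (v i) (v j) + B (v j) (v i) = 0)
    (hcyc : ∀ i j k, B (v i * v j) (v k) + B (v j * v k) (v i) + B (v k * v i) (v j) = 0) :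
    Jmod C ≤ LinearMap.ker (TensorProduct.lift B) := by
  have hanti' : B + B.flip = 0 :=
    LinearMap.ext_on_range hv fun i => LinearMap.ext_on_range hv fun j => hanti i j
  have hcyc' : (LinearMap.mul ℂ C).compr₂ B
      + (LinearMap.lflip.comp ((LinearMap.mul ℂ C).compr₂ B)).flip
      + LinearMap.lflip.comp ((LinearMap.mul ℂ C).compr₂ B).flip = 0 :=
    LinearMap.ext_on_range hv fun i => LinearMap.ext_on_range hv fun j =>
      LinearMap.ext_on_range hv fun k => by simpa using hcyc i j k
  rw [Jmod, Submodule.span_le]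
  rintro p (⟨x, y, rfl⟩ | ⟨x, y, z, rfl⟩)
  · simpa using LinearMap.congr_fun₂ hanti' x y
  · simpa using congrArg (fun f => f x y z) hcyc'

end Algebra

section Bicharacter

variable {n : ℕ} (q : Fin (n+1) → Fin (n+1) → ℂˣ)

lemma sig_add_left (a b c : Fin (n+1) → ℤ) : sig q (a + b) c = sig q a c * sig q b c := by
  simp only [sig, ← Finset.prod_mul_distrib]
  refine Finset.prod_congr rfl fun i _ => Finset.prod_congr rfl fun j _ => ?_
  split_ifs <;> simp [add_mul, zpow_add]

lemma sig_add_right (a b c : Fin (n+1) → ℤ) : sig q a (b + c) = sig q a b * sig q a c := by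
  simp only [sig, ← Finset.prod_mul_distrib]
  refine Finset.prod_congr rfl fun i _ => Finset.prod_congr rfl fun j _ => ?_
  split_ifs <;> simp [mul_add, zpow_add]

@[simp]
lemma sig_zero_left (b : Fin (n+1) → ℤ) : sig q 0 b = 1 := by
  simp [sig]

@[simp]
lemma sig_zero_right (a : Fin (n+1) → ℤ) : sig q a 0 = 1 := by
  simp [sig]

lemma sig_cocycle (r s t : Fin (n+1) → ℤ) :
    (sig q s t : ℂ) * sig q r (s + t) = sig q r s * sig q (r + s) t := by
  norm_cast
  rw [sig_add_left, sig_add_right]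
  ac_rfl

lemma forall_ff_eq_one_iff {a : Fin (n+1) → ℤ} :
    (∀ b, ff q a b = 1) ↔ ∀ r s, r + s = a → sig q r s = sig q s r := by
  simp only [ff, mul_inv_eq_one]
  constructor
  · rintro ha r s rfl
    have h := ha r
    rw [sig_add_left, sig_add_right] at h
    exact (mul_left_cancel h).symm
  · intro ha b
    rw [← add_sub_cancel b a, sig_add_left, sig_add_right, ha b (a - b) (add_sub_cancel b a)]

variable {q}

lemma sig_cocycle_rotate {a : Fin (n+1) → ℤ} (ha : ∀ b, ff q a b = 1)
    {r s t : Fin (n+1) → ℤ} (h : r + s + t = a) :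
    (sig q t r : ℂ) * sig q s (t + r) = sig q r s * sig q (r + s) t := by
  have hcomm := (forall_ff_eq_one_iff q).1 ha r (t + s) (by rw [← h]; abel)
  rw [sig_add_left, sig_add_right] at hcomm
  norm_cast
  rw [sig_add_left, sig_add_right]
  calc sig q t r * (sig q s t * sig q s r)
      = (sig q t r * sig q s r) * sig q s t := by ac_rfl
    _ = (sig q r t * sig q r s) * sig q s t := by rw [hcomm]
    _ = sig q r s * (sig q r t * sig q s t) := by ac_rfl

end Bicharacter

section TwistedGroupAlgebra

variable {n : ℕ} {q : Fin (n+1) → Fin (n+1) → ℂˣ} {C : Type*} [Ring C] [Algebra ℂ C]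
  {T : (Fin (n+1) → ℤ) → C}

lemma brktQ_bra_T (hT : ∀ a b, T a * T b = ((sig q a b : ℂ)) • T (a + b))
    (r s : Fin (n+1) → ℤ) :
    brktQ C (bra (T r) (T s)) = ((sig q r s : ℂ) - sig q s r) • T (r + s) := by
  rw [brktQ_bra, hT, hT, add_comm s r, sub_smul]

lemma sig_smul_bra_add (hT : ∀ a b, T a * T b = ((sig q a b : ℂ)) • T (a + b))
    (r s t : Fin (n+1) → ℤ) :
    (sig q r s : ℂ) • bra (T (r + s)) (T t)
      = (sig q s t : ℂ) • bra (T r) (T (s + t)) + (sig q t r : ℂ) • bra (T s) (T (t + r)) := by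
  have h := bra_mul_add_bra_mul_add_bra_mul (T r) (T s) (T t)
  rw [hT, hT, hT, bra_smul_left, bra_smul_left, bra_smul_left, bra_swap (T r) (T (s + t)),
    bra_swap (T s) (T (t + r))] at h
  linear_combination (norm := module) h

lemma sub_smul_bra_eq (hT : ∀ a b, T a * T b = ((sig q a b : ℂ)) • T (a + b))
    (r s t : Fin (n+1) → ℤ) :
    ((sig q s (r + t) : ℂ) - sig q (r + t) s) • bra (T r) (T (s + t))
      = ((sig q r (s + t) : ℂ) - sig q (s + t) r) • bra (T s) (T (t + r)) := by
  have hrs := sig_smul_bra_add hT r s t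
  have hsr := sig_smul_bra_add hT s r t
  rw [add_comm s r, add_comm r t, add_comm t s] at hsr
  simp only [sig_add_left, sig_add_right, Units.val_mul]
  linear_combination (norm := module) (sig q r s : ℂ) • hsr - (sig q s r : ℂ) • hrs

lemma bra_T_zero (hT : ∀ a b, T a * T b = ((sig q a b : ℂ)) • T (a + b))
    (r : Fin (n+1) → ℤ) : bra (T r) (T 0) = 0 := by
  have h := sig_smul_bra_add hT r 0 0
  simp only [add_zero, zero_add, sig_zero_left, sig_zero_right, Units.val_one, one_smul,
    left_eq_add] at h
  rw [bra_swap, h, neg_zero]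

variable (T) in
noncomputable def degreePart (a : Fin (n+1) → ℤ) : Submodule ℂ ((C ⊗[ℂ] C) ⧸ Jmod C) :=
  Submodule.span ℂ {v | ∃ r s : Fin (n+1) → ℤ, r + s = a ∧ v = bra (T r) (T s)}

lemma HC1_inf_degreePart_eq_bot (hT : ∀ a b, T a * T b = ((sig q a b : ℂ)) • T (a + b))
    (hTind : LinearIndependent ℂ T) {a : Fin (n+1) → ℤ} (ha : ¬ ∀ b, ff q a b = 1) :
    HC1 C ⊓ degreePart T a = ⊥ := by
  obtain ⟨r₀, s₀, hrs₀, hne⟩ : ∃ r₀ s₀, r₀ + s₀ = a ∧ sig q r₀ s₀ ≠ sig q s₀ r₀ := by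
    simpa [forall_ff_eq_one_iff] using ha
  have hκ : (sig q r₀ s₀ : ℂ) - sig q s₀ r₀ ≠ 0 := sub_ne_zero.2 (Units.val_injective.ne hne)
  have hle : degreePart T a ≤ ℂ ∙ bra (T r₀) (T s₀) := by
    refine Submodule.span_le.2 ?_
    rintro _ ⟨r, s, hrs, rfl⟩
    obtain ⟨t, rfl⟩ : ∃ t, s = r₀ + t := ⟨s - r₀, (add_sub_cancel r₀ s).symm⟩
    have ht : t + r = s₀ := by rw [← add_left_cancel_iff (a := r₀), hrs₀, ← hrs]; abel
    have h := sub_smul_bra_eq hT r r₀ t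
    rw [add_comm r t, ht] at h
    exact Submodule.mem_span_singleton.2 ⟨_, by rw [mul_smul, ← h, inv_smul_smul₀ hκ]⟩
  rw [eq_bot_iff]
  rintro x ⟨hx, hx'⟩
  obtain ⟨c, rfl⟩ := Submodule.mem_span_singleton.1 (hle hx')
  rw [SetLike.mem_coe, HC1_eq_ker_brktQ, LinearMap.mem_ker, map_smul, brktQ_bra_T hT, smul_smul,
    smul_eq_zero, mul_eq_zero, or_iff_left (hTind.ne_zero _), or_iff_left hκ] at hx
  rw [hx, zero_smul]
  exact Submodule.zero_mem _

end TwistedGroupAlgebra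

section Radical

variable {n : ℕ} {q : Fin (n+1) → Fin (n+1) → ℂˣ} {C : Type*} [Ring C] [Algebra ℂ C]
  {T : (Fin (n+1) → ℤ) → C} {a : Fin (n+1) → ℤ}

lemma degreePart_le_HC1 (hT : ∀ a b, T a * T b = ((sig q a b : ℂ)) • T (a + b))
    (ha : ∀ b, ff q a b = 1) : degreePart T a ≤ HC1 C := by
  refine Submodule.span_le.2 ?_
  rintro _ ⟨r, s, hrs, rfl⟩
  rw [SetLike.mem_coe, HC1_eq_ker_brktQ, LinearMap.mem_ker, brktQ_bra_T hT,
    (forall_ff_eq_one_iff q).1 ha r s hrs, sub_self, zero_smul]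

variable (q T) in
noncomputable def normBra (a r : Fin (n+1) → ℤ) : (C ⊗[ℂ] C) ⧸ Jmod C :=
  ((sig q r (a - r) : ℂ))⁻¹ • bra (T r) (T (a - r))

lemma normBra_add (hT : ∀ a b, T a * T b = ((sig q a b : ℂ)) • T (a + b))
    (ha : ∀ b, ff q a b = 1) (r s : Fin (n+1) → ℤ) :
    normBra q T a (r + s) = normBra q T a r + normBra q T a s := by
  obtain ⟨t, ht⟩ : ∃ t, r + s + t = a := ⟨a - (r + s), add_sub_cancel _ _⟩
  have h₁ : a - (r + s) = t := by rw [← ht]; abel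
  have h₂ : a - r = s + t := by rw [← ht]; abel
  have h₃ : a - s = t + r := by rw [← ht]; abel
  simp only [normBra, h₁, h₂, h₃]
  linear_combination (norm := skip)
    ((sig q r s : ℂ) * sig q (r + s) t)⁻¹ • sig_smul_bra_add hT r s t
  match_scalars
  · field_simp; ring
  · rw [← sig_cocycle]; field_simp; ring
  · rw [← sig_cocycle_rotate ha ht]; field_simp; ring

lemma normBra_self (hT : ∀ a b, T a * T b = ((sig q a b : ℂ)) • T (a + b)) :
    normBra q T a a = 0 := by
  rw [normBra, sub_self, bra_T_zero hT, smul_zero]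

variable (q a) in
noncomputable def radPairing (ψ : (Fin (n+1) → ℤ) →+ ℂ) (r s : Fin (n+1) → ℤ) : ℂ :=
  if r + s = a then ψ r * sig q r s else 0

lemma radPairing_add_swap (ha : ∀ b, ff q a b = 1) {ψ : (Fin (n+1) → ℤ) →+ ℂ} (hψ : ψ a = 0)
    (r s : Fin (n+1) → ℤ) : radPairing q a ψ r s + radPairing q a ψ s r = 0 := by
  simp only [radPairing, add_comm s r]
  split_ifs with h
  · rw [(forall_ff_eq_one_iff q).1 ha r s h, ← add_mul, ← map_add, h, hψ, zero_mul]
  · rw [add_zero]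

lemma radPairing_cyclic (ha : ∀ b, ff q a b = 1) {ψ : (Fin (n+1) → ℤ) →+ ℂ} (hψ : ψ a = 0)
    (r s t : Fin (n+1) → ℤ) :
    sig q r s * radPairing q a ψ (r + s) t + sig q s t * radPairing q a ψ (s + t) r
      + sig q t r * radPairing q a ψ (t + r) s = 0 := by
  simp only [radPairing]
  by_cases h : r + s + t = a
  · have h₂ : s + t + r = a := by rw [← h]; abel
    have h₃ : t + r + s = a := by rw [← h]; abel
    have hψ' : ψ (r + s) + ψ (s + t) + ψ (t + r) = 0 := by
      rw [← map_add, ← map_add, show r + s + (s + t) + (t + r) = a + a by rw [← h]; abel,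
        map_add, hψ, add_zero]
    rw [if_pos h, if_pos h₂, if_pos h₃, (forall_ff_eq_one_iff q).1 ha _ _ h₂,
      (forall_ff_eq_one_iff q).1 ha _ _ h₃]
    linear_combination ψ (s + t) * sig_cocycle q r s t + ψ (t + r) * sig_cocycle_rotate ha h
      + (sig q r s : ℂ) * sig q (r + s) t * hψ'
  · rw [if_neg h, if_neg (by rw [← add_rotate]; exact h), if_neg (by rw [add_rotate]; exact h)]
    ring

lemma exists_dual_normBra (hT : ∀ a b, T a * T b = ((sig q a b : ℂ)) • T (a + b))
    (hTind : LinearIndependent ℂ T) (hTspan : Submodule.span ℂ (Set.range T) = ⊤)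
    (ha : ∀ b, ff q a b = 1) (ψ : (Fin (n+1) → ℤ) →+ ℂ) (hψ : ψ a = 0) :
    ∃ L : Module.Dual ℂ ((C ⊗[ℂ] C) ⧸ Jmod C), ∀ r, L (normBra q T a r) = ψ r := by
  let b := Module.Basis.mk hTind hTspan.ge
  let B : C →ₗ[ℂ] C →ₗ[ℂ] ℂ := b.constr ℂ fun r => b.constr ℂ (radPairing q a ψ r)
  have hB r s : B (T r) (T s) = radPairing q a ψ r s := by
    simp only [B, ← Module.Basis.mk_apply hTind hTspan.ge, Module.Basis.constr_basis, b]
  have hJ : Jmod C ≤ LinearMap.ker (TensorProduct.lift B) := by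
    refine Jmod_le_ker_lift hTspan B (fun r s => ?_) (fun r s t => ?_)
    · simpa only [hB] using radPairing_add_swap ha hψ r s
    · simpa only [hT, map_smul, LinearMap.smul_apply, hB, smul_eq_mul]
        using radPairing_cyclic ha hψ r s t
  refine ⟨(Jmod C).liftQ _ hJ, fun r => ?_⟩
  simp only [normBra, bra, map_smul, Submodule.liftQ_apply, TensorProduct.lift.tmul, hB,
    radPairing, add_sub_cancel, if_true, smul_eq_mul]
  field_simp

variable (q T a) in
noncomputable def normBraLin : (Fin (n+1) → ℂ) →ₗ[ℂ] (C ⊗[ℂ] C) ⧸ Jmod C :=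
  Fintype.linearCombination ℂ fun i => normBra q T a (Pi.single i 1)

lemma normBraLin_intCast (hT : ∀ a b, T a * T b = ((sig q a b : ℂ)) • T (a + b))
    (ha : ∀ b, ff q a b = 1) (r : Fin (n+1) → ℤ) :
    normBraLin q T a (fun i => (r i : ℂ)) = normBra q T a r := by
  let D := AddMonoidHom.mk' (normBra q T a) (normBra_add hT ha)
  calc normBraLin q T a (fun i => (r i : ℂ)) = ∑ i, r i • D (Pi.single i 1) := by
        simp only [normBraLin, Fintype.linearCombination_apply, Int.cast_smul_eq_zsmul]; rfl
    _ = D (∑ i, Pi.single i (r i)) := by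
        simp only [map_sum, ← map_zsmul, ← Pi.single_smul, smul_eq_mul, mul_one]
    _ = normBra q T a r := by rw [Finset.univ_sum_single]; rfl

lemma range_normBraLin (hT : ∀ a b, T a * T b = ((sig q a b : ℂ)) • T (a + b))
    (ha : ∀ b, ff q a b = 1) : LinearMap.range (normBraLin q T a) = degreePart T a := by
  refine le_antisymm ?_ (Submodule.span_le.2 ?_)
  · rw [normBraLin, Fintype.range_linearCombination, Submodule.span_le]
    rintro _ ⟨i, rfl⟩
    exact Submodule.smul_mem _ _ (Submodule.subset_span ⟨_, _, add_sub_cancel _ a, rfl⟩)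
  · rintro _ ⟨r, s, rfl, rfl⟩
    have h : bra (T r) (T s) = (sig q r s : ℂ) • normBra q T (r + s) r := by
      rw [normBra, add_sub_cancel_left, smul_inv_smul₀ (Units.ne_zero _)]
    rw [h, ← normBraLin_intCast hT ha]
    exact Submodule.smul_mem _ _ (LinearMap.mem_range_self _ _)

lemma ker_normBraLin (hT : ∀ a b, T a * T b = ((sig q a b : ℂ)) • T (a + b))
    (hTind : LinearIndependent ℂ T) (hTspan : Submodule.span ℂ (Set.range T) = ⊤)
    (ha : ∀ b, ff q a b = 1) :
    LinearMap.ker (normBraLin q T a) = ℂ ∙ (fun i => (a i : ℂ)) := by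
  refine le_antisymm (fun x hx => ?_) ?_
  · rw [← Subspace.forall_mem_dualAnnihilator_apply_eq_zero_iff]
    intro φ hφ
    have hφa := (Submodule.mem_dualAnnihilator _).1 hφ _ (Submodule.mem_span_singleton_self _)
    obtain ⟨L, hL⟩ := exists_dual_normBra hT hTind hTspan ha
      (φ.toAddMonoidHom.comp ((Int.castAddHom ℂ).compLeft _)) hφa
    have hLφ : L ∘ₗ normBraLin q T a = φ := by
      refine (Pi.basisFun ℂ _).ext fun i => ?_
      simp only [LinearMap.comp_apply, Pi.basisFun_apply, normBraLin,
        Fintype.linearCombination_apply_single, one_smul, hL]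
      rw [AddMonoidHom.comp_apply, LinearMap.toAddMonoidHom_coe]
      congr 1
      ext j
      simp [Pi.single_apply]
    rw [← hLφ, LinearMap.comp_apply, LinearMap.mem_ker.1 hx, map_zero]
  · rw [Submodule.span_singleton_le_iff_mem, LinearMap.mem_ker, normBraLin_intCast hT ha,
      normBra_self hT]

lemma finrank_HC1_inf_degreePart_add (hT : ∀ a b, T a * T b = ((sig q a b : ℂ)) • T (a + b))
    (hTind : LinearIndependent ℂ T) (hTspan : Submodule.span ℂ (Set.range T) = ⊤)
    (ha : ∀ b, ff q a b = 1) :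
    Module.finrank ℂ ↥(HC1 C ⊓ degreePart T a)
      + Module.finrank ℂ ↥(ℂ ∙ (fun i => (a i : ℂ))) = n + 1 := by
  rw [inf_of_le_right (degreePart_le_HC1 hT ha), ← range_normBraLin hT ha,
    ← ker_normBraLin hT hTind hTspan ha, LinearMap.finrank_range_add_finrank_ker,
    Module.finrank_fin_fun]

end Radical

theorem stmt13_general {n : ℕ} (q : Fin (n+1) → Fin (n+1) → ℂˣ)
    {C : Type*} [Ring C] [Algebra ℂ C]
    (T : (Fin (n+1) → ℤ) → C)
    (hT : ∀ a b, T a * T b = ((sig q a b : ℂ)) • T (a + b))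
    (hTind : LinearIndependent ℂ T)
    (hTspan : Submodule.span ℂ (Set.range T) = ⊤)
    (a : Fin (n+1) → ℤ) :
    -- the degree-`a` component of `HC₁(ℂ_q)`
    (¬ (∀ b, ff q a b = 1) →
      Module.finrank ℂ
        ↥(HC1 C ⊓ Submodule.span ℂ
            {v | ∃ r s : Fin (n+1) → ℤ, r + s = a ∧ v = bra (T r) (T s)}) = 0) ∧
    ((∀ b, ff q a b = 1) → a ≠ 0 →
      Module.finrank ℂ
        ↥(HC1 C ⊓ Submodule.span ℂ
            {v | ∃ r s : Fin (n+1) → ℤ, r + s = a ∧ v = bra (T r) (T s)}) = n) ∧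
    (a = 0 →
      Module.finrank ℂ
        ↥(HC1 C ⊓ Submodule.span ℂ
            {v | ∃ r s : Fin (n+1) → ℤ, r + s = a ∧ v = bra (T r) (T s)}) = n + 1) := by
  refine ⟨fun ha => ?_, fun ha ha₀ => ?_, fun ha₀ => ?_⟩
  · change Module.finrank ℂ ↥(HC1 C ⊓ degreePart T a) = 0
    rw [HC1_inf_degreePart_eq_bot hT hTind ha, finrank_bot]
  · have hne : (fun i => (a i : ℂ)) ≠ 0 := fun h => ha₀ (funext fun i => by
      simpa using congrFun h i)
    have h := finrank_HC1_inf_degreePart_add hT hTind hTspan ha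
    rw [finrank_span_singleton hne] at h
    exact Nat.add_right_cancel h
  · have hrad : ∀ b, ff q a b = 1 := fun b => by simp [ff, ha₀]
    have hzero : (fun i => (a i : ℂ)) = 0 := by ext; simp [ha₀]
    have h := finrank_HC1_inf_degreePart_add hT hTind hTspan hrad
    rw [Submodule.span_singleton_eq_bot.2 hzero, finrank_bot, add_zero] at h
    exact h

theorem stmt13 {n : ℕ} (q : Fin (n+1) → Fin (n+1) → ℂˣ)
    (hq1 : ∀ i, q i i = 1) (hq2 : ∀ i j, q i j = (q j i)⁻¹)
    (hroot : ∀ i j, ∃ m : ℕ, 0 < m ∧ q i j ^ m = 1)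
    {C : Type*} [Ring C] [Algebra ℂ C]
    (T : (Fin (n+1) → ℤ) → C)
    (hT : ∀ a b, T a * T b = ((sig q a b : ℂ)) • T (a + b))
    (hT0 : T 0 = 1)
    (hTind : LinearIndependent ℂ T)
    (hTspan : Submodule.span ℂ (Set.range T) = ⊤)
    (a : Fin (n+1) → ℤ) :
    -- the degree-`a` component of `HC₁(ℂ_q)`
    (¬ (∀ b, ff q a b = 1) →
      Module.finrank ℂ
        ↥(HC1 C ⊓ Submodule.span ℂ
            {v | ∃ r s : Fin (n+1) → ℤ, r + s = a ∧ v = bra (T r) (T s)}) = 0) ∧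
    ((∀ b, ff q a b = 1) → a ≠ 0 →
      Module.finrank ℂ
        ↥(HC1 C ⊓ Submodule.span ℂ
            {v | ∃ r s : Fin (n+1) → ℤ, r + s = a ∧ v = bra (T r) (T s)}) = n) ∧
    (a = 0 →
      Module.finrank ℂ
        ↥(HC1 C ⊓ Submodule.span ℂ
            {v | ∃ r s : Fin (n+1) → ℤ, r + s = a ∧ v = bra (T r) (T s)}) = n + 1) :=
  stmt13_general q T hT hTind hTspan a
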